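/- Let G = (V,E) be a finite claw-free graph with maximum degree at most Δ, let n ≥ 1 be an integer, and let A be an independent set of size n − 1 in G. Then C(lk(I_n(G), A)) ≤ ⌊(n − 1)Δ / 2⌋. -/

import Mathlib

namespace PaperKL

open Finset

variable {V : Type*}

section Complexes
variable [DecidableEq V]

/-- A (finite) abstract simplicial complex: a family of finite sets closed under
taking subsets. -/
def IsSimplicialComplex (X : Finset (Finset V)) : Prop :=
  ∀ σ ∈ X, ∀ τ ⊆ σ, τ ∈ X

/-- `σ` is a free face of `X`, with `τ` the unique maximal face of `X` containing it:
equivalently, every face of `X` containing `σ` is contained in `τ`. -/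
def IsFreeFace (X : Finset (Finset V)) (σ τ : Finset V) : Prop :=
  σ ∈ X ∧ τ ∈ X ∧ σ ⊆ τ ∧ ∀ η ∈ X, σ ⊆ η → η ⊆ τ

/-- `Y` is obtained from `X` by an elementary `d`-collapse. -/
def ElemCollapse (d : ℕ) (X Y : Finset (Finset V)) : Prop :=
  ∃ σ τ : Finset V, IsFreeFace X σ τ ∧ σ.card ≤ d ∧
    Y = X.filter fun η => ¬(σ ⊆ η ∧ η ⊆ τ)

/-- `X` is `d`-collapsible: some sequence of elementary `d`-collapses reduces `X`
to the void complex `∅`. -/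
def Collapsible (d : ℕ) (X : Finset (Finset V)) : Prop :=
  Relation.ReflTransGen (ElemCollapse d) X ∅

/-- The collapsibility number `C(X)`: the minimum `d` such that `X` is `d`-collapsible. -/
noncomputable def collapseNum (X : Finset (Finset V)) : ℕ :=
  sInf {d | Collapsible d X}

/-- The link `lk(X, τ) = {η ∈ X : η ∩ τ = ∅, η ∪ τ ∈ X}`. -/
def link (X : Finset (Finset V)) (τ : Finset V) : Finset (Finset V) :=
  X.filter fun η => η ∩ τ = ∅ ∧ η ∪ τ ∈ X

/-- Deletion of a vertex: `X \ v`. -/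
def deleteVert (X : Finset (Finset V)) (v : V) : Finset (Finset V) :=
  X.filter fun σ => v ∉ σ

/-- The induced subcomplex on the complement of `S`: `X[V \ S]`. -/
def deleteSet (X : Finset (Finset V)) (S : Finset V) : Finset (Finset V) :=
  X.filter fun σ => σ ∩ S = ∅

/-- The vertex set of a complex: the union of its faces. -/
def vertexSet (X : Finset (Finset V)) : Finset V := X.sup id

/-- The join `X ∗ Y = {σ ∪ τ : σ ∈ X, τ ∈ Y}`. -/
def joinSC (X Y : Finset (Finset V)) : Finset (Finset V) :=
  (X ×ˢ Y).image fun p => p.1 ∪ p.2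

/-- `τ` is a maximal face of `X`. -/
def IsMaximalFace (X : Finset (Finset V)) (τ : Finset V) : Prop :=
  τ ∈ X ∧ ∀ η ∈ X, τ ⊆ η → η = τ

/-- `X` is a cone over `v`: every maximal face of `X` contains `v`. -/
def IsConeOver (X : Finset (Finset V)) (v : V) : Prop :=
  ∀ τ, IsMaximalFace X τ → v ∈ τ

/-- A missing face of `X`: a subset of the vertex set which is not a face,
all of whose proper subsets are faces. -/
def IsMissingFace (X : Finset (Finset V)) (τ : Finset V) : Prop :=
  τ ⊆ vertexSet X ∧ τ ∉ X ∧ ∀ σ ⊂ τ, σ ∈ X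

end Complexes

/-- A finset is an independent set in the graph `G`. -/
def IsIndepSet (G : SimpleGraph V) (s : Finset V) : Prop :=
  ∀ u ∈ s, ∀ v ∈ s, ¬ G.Adj u v

section Graphs
variable [DecidableEq V]

/-- The complex `I_n(G[W])` of the induced subgraph `G[W]`, realized as the family of
subsets `U ⊆ W` such that `U` contains no independent set of `G` of size `n`. -/
noncomputable def indComplexOn (G : SimpleGraph V) (W : Finset V) (n : ℕ) :
    Finset (Finset V) :=
  @Finset.filter _ (fun U => ¬ ∃ I ⊆ U, I.card = n ∧ IsIndepSet G I)
    (Classical.decPred _) W.powerset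

variable [Fintype V]

/-- The complex `I_n(G)`: subsets of `V` containing no independent set of size `n`. -/
noncomputable def indComplex (G : SimpleGraph V) (n : ℕ) : Finset (Finset V) :=
  indComplexOn G Finset.univ n

/-- The open neighborhood of `v` as a finset. -/
noncomputable def nbrsFinset (G : SimpleGraph V) (v : V) : Finset V :=
  @Finset.filter _ (fun u => G.Adj v u) (Classical.decPred _) Finset.univ

/-- Filter of a finset by an arbitrary predicate (classical decidability). -/
noncomputable def cfilter (p : V → Prop) (s : Finset V) : Finset V :=
  @Finset.filter _ p (Classical.decPred _) s

end Graphs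

/-- `G` has maximum degree at most `Δ`. -/
def MaxDegLE (G : SimpleGraph V) (Δ : ℕ) : Prop :=
  ∀ v : V, (G.neighborSet v).ncard ≤ Δ

/-- `G` is claw-free: it has no induced subgraph isomorphic to `K_{1,3}`. -/
def ClawFree (G : SimpleGraph V) : Prop :=
  ¬ ∃ a b c d : V, b ≠ c ∧ b ≠ d ∧ c ≠ d ∧
    G.Adj a b ∧ G.Adj a c ∧ G.Adj a d ∧ ¬G.Adj b c ∧ ¬G.Adj b d ∧ ¬G.Adj c d

/-- `G` is chordal: it has no induced cycle of length at least 4. -/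
def IsChordal (G : SimpleGraph V) : Prop :=
  ∀ m : ℕ, 4 ≤ m → ¬ ∃ f : ZMod m → V, Function.Injective f ∧
    ∀ i j : ZMod m, G.Adj (f i) (f j) ↔ (j = i + 1 ∨ i = j + 1)

/-- `v` is a simplicial vertex of `G`: its closed neighborhood is a clique. -/
def IsSimplicialVertex (G : SimpleGraph V) (v : V) : Prop :=
  ∀ a b : V, G.Adj v a → G.Adj v b → a ≠ b → G.Adj a b

/-- The connected component of `v` in `G` is a path: its vertices can be enumerated
as `f 0, …, f m` with adjacency exactly between consecutive vertices. -/
def InPathComponent (G : SimpleGraph V) (v : V) : Prop :=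
  ∃ (m : ℕ) (f : Fin (m + 1) → V), Function.Injective f ∧
    (∀ w, G.Reachable v w ↔ ∃ i, f i = w) ∧
    (∀ i j : Fin (m + 1), G.Adj (f i) (f j) ↔ ((i : ℕ) + 1 = (j : ℕ) ∨ (j : ℕ) + 1 = (i : ℕ)))

/-- The collection `A 0, …, A (t-1)` of independent sets of `G` admits a rainbow
independent set of size `n`: there are indices `g 0 < ⋯ < g (n-1)` and distinct
vertices `a j ∈ A (g j)` forming an independent set of `G`. -/
def HasRainbowIndepSet [DecidableEq V] (G : SimpleGraph V) (n : ℕ) {t : ℕ} (A : Fin t → Finset V) : Prop :=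
  ∃ (g : Fin n → Fin t) (a : Fin n → V), StrictMono g ∧ Function.Injective a ∧
    (∀ j, a j ∈ A (g j)) ∧ IsIndepSet G (Finset.image a Finset.univ)

section FGraphs
variable [DecidableEq V] [Fintype V]

/-- `f_G(n)`: the minimum `t` such that every collection of `t` independent sets of
size `n` in `G` has a rainbow independent set of size `n`. -/
noncomputable def fRainbow (G : SimpleGraph V) (n : ℕ) : ℕ :=
  sInf {t | ∀ A : Fin t → Finset V,
    (∀ i, IsIndepSet G (A i) ∧ (A i).card = n) → HasRainbowIndepSet G n A}

/-- The independence number `α(G)`. -/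
noncomputable def indepNum (G : SimpleGraph V) : ℕ :=
  (@Finset.filter _ (fun s => IsIndepSet G s) (Classical.decPred _)
    (Finset.univ : Finset V).powerset).sup Finset.card

end FGraphs

/-!
For `A ⊆ S` and `W` disjoint from `S`, the complex of `η ⊆ W` such that `η ∪ S` contains no
independent `n`-set (for `S = A`, `W = V \ A` this is the link in question) is
`⌊Φ(W) / 2⌋`-collapsible, where `Φ(W)` counts the edges between `W` and `A`. This goes by
induction on `W`. A vertex `u` with `S ∪ {u}` not a face is deleted for free; every other vertex
has a neighbour in `A`, as otherwise `A ∪ {u}` is an independent `n`-set. Hence coning off a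
vertex `v` that has two neighbours in `A`, or that forms a non-face with another vertex `u`,
costs one in the link but lowers `Φ` there by at least `2`. If neither happens, the complex is a
full simplex: given an independent `n`-set `I` in `η ∪ S`, some component of the bipartite
graph of edges between `I \ A` and `A \ I` has more vertices in `I \ A`; by claw-freeness it is
a path whose inner vertices have two neighbours in `A`, and exchanging it into `A` yields an
independent `n`-set meeting `W` in at most its two ends.
-/

section Collapse

variable [DecidableEq V] {X Y : Finset (Finset V)} {d e : ℕ} {v : V}

theorem ElemCollapse.mono (h : ElemCollapse d X Y) (hd : d ≤ e) : ElemCollapse e X Y :=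
  let ⟨σ, τ, hfree, hσ, hY⟩ := h
  ⟨σ, τ, hfree, hσ.trans hd, hY⟩

theorem Collapsible.mono (h : Collapsible d X) (hd : d ≤ e) : Collapsible e X :=
  Relation.ReflTransGen.mono (fun _ _ h => ElemCollapse.mono h hd) _ _ h

theorem collapsible_powerset (d : ℕ) (W : Finset V) : Collapsible d W.powerset :=
  .single ⟨∅, W, ⟨empty_mem_powerset W, mem_powerset_self W, empty_subset W,
    fun _ hη _ => mem_powerset.1 hη⟩, by simp, by ext; simp⟩

theorem IsSimplicialComplex.of_elemCollapse (hX : IsSimplicialComplex X)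
    (h : ElemCollapse d X Y) : IsSimplicialComplex Y := by
  obtain ⟨σ, τ, ⟨-, -, -, hfree⟩, -, rfl⟩ := h
  simp only [IsSimplicialComplex, mem_filter] at hX ⊢
  exact fun η ⟨hη, hnot⟩ ζ hζ => ⟨hX η hη ζ hζ, fun ⟨hσ, _⟩ =>
    hnot ⟨hσ.trans hζ, hfree η hη (hσ.trans hζ)⟩⟩

theorem mem_link_singleton {η : Finset V} :
    η ∈ link X {v} ↔ η ∈ X ∧ v ∉ η ∧ insert v η ∈ X := by
  simp [link, Finset.eq_empty_iff_forall_notMem, Finset.union_singleton]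

/-- An elementary collapse of the link of `v` along `σ ⊆ τ` is realised in `X` by the
collapse along `insert v σ ⊆ insert v τ`, which leaves the deletion of `v` untouched. -/
theorem ElemCollapse.exists_lift_link (hX : IsSimplicialComplex X)
    (h : ElemCollapse e (link X {v}) Y) :
    ∃ X', ElemCollapse (e + 1) X X' ∧ link X' {v} = Y ∧ deleteVert X' v = deleteVert X v := by
  obtain ⟨σ, τ, ⟨hσ, hτ, hστ, hfree⟩, hcard, rfl⟩ := h
  rw [mem_link_singleton] at hσ hτ
  refine ⟨_, ⟨insert v σ, insert v τ, ⟨hσ.2.2, hτ.2.2, insert_subset_insert v hστ, ?_⟩,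
    by rw [card_insert_of_notMem hσ.2.1]; omega, rfl⟩, ?_, ?_⟩
  · intro η hη hvση
    have hvη : v ∈ η := hvση (mem_insert_self v σ)
    have hlink : η.erase v ∈ link X {v} := mem_link_singleton.2
      ⟨hX η hη _ (erase_subset v η), notMem_erase v η, by rwa [insert_erase hvη]⟩
    rw [← insert_erase hvη]
    exact insert_subset_insert v (hfree _ hlink (subset_erase.2 ⟨(subset_insert v σ).trans
      hvση, hσ.2.1⟩))
  · ext η
    simp only [mem_link_singleton, mem_filter]
    constructor
    · rintro ⟨⟨hη, -⟩, hvη, hvηX, hnot⟩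
      exact ⟨⟨hη, hvη, hvηX⟩, fun ⟨h1, h2⟩ =>
        hnot ⟨insert_subset_insert v h1, insert_subset_insert v h2⟩⟩
    · rintro ⟨⟨hη, hvη, hvηX⟩, hnot⟩
      refine ⟨⟨hη, fun ⟨h1, _⟩ => hvη (h1 (mem_insert_self v σ))⟩, hvη, hvηX, ?_⟩
      rw [insert_subset_insert_iff hσ.2.1, insert_subset_insert_iff hvη]
      exact hnot
  · ext η
    simp only [deleteVert, mem_filter, and_congr_left_iff, and_iff_left_iff_imp]
    exact fun hvη _ ⟨h1, _⟩ => hvη (h1 (mem_insert_self v σ))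

theorem reflTransGen_deleteVert_of_link (h : Relation.ReflTransGen (ElemCollapse e) Y ∅) :
    ∀ X, IsSimplicialComplex X → link X {v} = Y →
      Relation.ReflTransGen (ElemCollapse (e + 1)) X (deleteVert X v) := by
  induction h using Relation.ReflTransGen.head_induction_on with
  | refl =>
    intro X hX hlink
    rw [show deleteVert X v = X from filter_true_of_mem fun η hη hvη => by
      simpa [hlink] using mem_link_singleton.2 ⟨hX η hη ∅ (empty_subset η), notMem_empty v,
        hX η hη {v} (singleton_subset_iff.2 hvη)⟩]
  | head hstep _ ih =>
    intro X hX hlink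
    obtain ⟨X', hXX', hlink', hdel⟩ := (hlink ▸ hstep).exists_lift_link hX
    exact .head hXX' (hdel ▸ ih X' (hX.of_elemCollapse hXX') hlink')

theorem Collapsible.of_link_of_deleteVert (hX : IsSimplicialComplex X)
    (hlink : Collapsible e (link X {v})) (hdel : Collapsible d (deleteVert X v)) :
    Collapsible (max (e + 1) d) X :=
  (Relation.ReflTransGen.mono (fun _ _ h => ElemCollapse.mono h (le_max_left _ _)) _ _
    (reflTransGen_deleteVert_of_link hlink X hX rfl)).trans (hdel.mono (le_max_right _ _))

end Collapse

def ContainsIndepSet (G : SimpleGraph V) (n : ℕ) (T : Finset V) : Prop :=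
  ∃ I ⊆ T, #I = n ∧ IsIndepSet G I

theorem ContainsIndepSet.mono {G : SimpleGraph V} {n : ℕ} {T T' : Finset V}
    (h : ContainsIndepSet G n T) (hT : T ⊆ T') : ContainsIndepSet G n T' :=
  let ⟨I, hI, hcard, hind⟩ := h
  ⟨I, hI.trans hT, hcard, hind⟩

theorem IsIndepSet.mono {G : SimpleGraph V} {S T : Finset V} (hT : IsIndepSet G T)
    (hST : S ⊆ T) : IsIndepSet G S :=
  fun x hx y hy => hT x (hST hx) y (hST hy)

theorem IsIndepSet.insert [DecidableEq V] {G : SimpleGraph V} {A : Finset V} {u : V}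
    (hA : IsIndepSet G A) (hu : ∀ a ∈ A, ¬ G.Adj u a) : IsIndepSet G (insert u A) := by
  simp only [IsIndepSet, mem_insert]
  rintro x (rfl | hx) y (rfl | hy) hxy
  exacts [G.loopless.irrefl _ hxy, hu _ hy hxy, hu _ hx hxy.symm, hA x hx y hy hxy]

section IndLink

variable [DecidableEq V] {G : SimpleGraph V} {n : ℕ} {S W η : Finset V} {u v : V}

/-- `indLink G n S W` is `lk(I_n(G[W ∪ S]), S)` for `S` disjoint from `W`. -/
noncomputable def indLink (G : SimpleGraph V) (n : ℕ) (S W : Finset V) : Finset (Finset V) :=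
  @Finset.filter _ (fun η => ¬ ContainsIndepSet G n (η ∪ S)) (Classical.decPred _) W.powerset

theorem mem_indLink : η ∈ indLink G n S W ↔ η ⊆ W ∧ ¬ ContainsIndepSet G n (η ∪ S) := by
  simp only [indLink, mem_filter, mem_powerset]

theorem isSimplicialComplex_indLink : IsSimplicialComplex (indLink G n S W) := by
  simp only [IsSimplicialComplex, mem_indLink]
  exact fun η hη ζ hζ => ⟨hζ.trans hη.1, fun h => hη.2 (h.mono (union_subset_union_left hζ))⟩

theorem indLink_eq_empty (hS : ContainsIndepSet G n S) : indLink G n S W = ∅ :=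
  eq_empty_of_forall_notMem fun _ hη => (mem_indLink.1 hη).2 (hS.mono subset_union_right)

theorem indLink_eq_powerset_of_forall (h : ∀ η ⊆ W, ¬ ContainsIndepSet G n (η ∪ S)) :
    indLink G n S W = W.powerset := by
  ext η
  rw [mem_indLink, mem_powerset]
  exact ⟨And.left, fun hη => ⟨hη, h η hη⟩⟩

theorem indLink_erase (hu : ContainsIndepSet G n (insert u S)) :
    indLink G n S W = indLink G n S (W.erase u) := by
  ext η
  simp only [mem_indLink, subset_erase, and_congr_left_iff, iff_self_and]
  exact fun hη _ huη => hη (hu.mono (insert_subset (mem_union_left S huη) subset_union_right))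

theorem deleteVert_indLink : deleteVert (indLink G n S W) v = indLink G n S (W.erase v) := by
  ext η
  simp only [deleteVert, mem_filter, mem_indLink, subset_erase]
  tauto

theorem link_indLink (hv : v ∈ W) :
    link (indLink G n S W) {v} = indLink G n (insert v S) (W.erase v) := by
  ext η
  have hins : insert v η ∪ S = η ∪ insert v S := by rw [insert_union, union_insert]
  simp only [mem_link_singleton, mem_indLink, subset_erase, insert_subset_iff, hins]
  exact ⟨fun ⟨⟨hW, _⟩, hvη, ⟨_, _⟩, h⟩ => ⟨⟨hW, hvη⟩, h⟩, fun ⟨⟨hW, hvη⟩, h⟩ =>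
    ⟨⟨hW, fun h' => h (h'.mono (union_subset_union_right (subset_insert v S)))⟩, hvη, ⟨hv, hW⟩, h⟩⟩

theorem not_containsIndepSet_union_of_card_le_two (hS : ¬ ContainsIndepSet G n S)
    (h1 : ∀ u ∈ W, ¬ ContainsIndepSet G n (insert u S))
    (h2 : ∀ u ∈ W, ∀ v ∈ W, u ≠ v → ¬ ContainsIndepSet G n (insert u (insert v S))) :
    ∀ T ⊆ W, #T ≤ 2 → ¬ ContainsIndepSet G n (T ∪ S) := by
  intro T hTW hT
  interval_cases hcard : #T
  · rwa [card_eq_zero.1 hcard, empty_union]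
  · obtain ⟨u, rfl⟩ := card_eq_one.1 hcard
    simpa using h1 u (hTW (mem_singleton_self u))
  · obtain ⟨u, v, huv, rfl⟩ := card_eq_two.1 hcard
    simpa using h2 u (hTW (by simp)) v (hTW (by simp)) huv

theorem link_indComplex_eq_indLink [Fintype V] (A : Finset V) :
    link (indComplex G n) A = indLink G n A (univ \ A) := by
  have hmem : ∀ U, U ∈ indComplex G n ↔ ¬ ContainsIndepSet G n U := fun U => by
    simp [indComplex, indComplexOn, ContainsIndepSet]
  ext η
  simp only [link, mem_filter, hmem, mem_indLink, subset_sdiff, disjoint_iff_inter_eq_empty]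
  exact ⟨fun ⟨_, hdisj, h⟩ => ⟨⟨subset_univ η, hdisj⟩, h⟩,
    fun ⟨⟨_, hdisj⟩, h⟩ => ⟨fun h' => h (h'.mono subset_union_left), hdisj, h⟩⟩

end IndLink

section Components

variable [Fintype V] [DecidableEq V]

theorem _root_.SimpleGraph.ConnectedComponent.card_supp_le_card_edgeFinset_inter_add_one
    {H : SimpleGraph V} [DecidableRel H.Adj] (C : H.ConnectedComponent)
    [DecidablePred (· ∈ C.supp)] :
    #C.supp.toFinset ≤ #(H.edgeFinset ∩ C.supp.toFinset.sym2) + 1 := by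
  rw [← SimpleGraph.map_edgeFinset_induce, card_map, ← Nat.card_eq_card_toFinset,
    SimpleGraph.edgeFinset, ← Nat.card_eq_card_toFinset]
  exact C.connected_toSimpleGraph.card_vert_le_card_edgeSet_add_one

theorem _root_.SimpleGraph.exists_connectedComponent_card_inter_lt {H : SimpleGraph V}
    [DecidableRel H.Adj] {s t : Finset V} (h : #t < #s) :
    ∃ C : H.ConnectedComponent, #(t ∩ C.supp.toFinset) < #(s ∩ C.supp.toFinset) := by
  classical
  have hfib : ∀ u : Finset V, #u = ∑ C : H.ConnectedComponent, #(u ∩ C.supp.toFinset) := by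
    intro u
    rw [card_eq_sum_card_fiberwise (f := H.connectedComponentMk) (t := univ) fun _ _ => mem_univ _]
    refine sum_congr rfl fun C _ => congrArg card ?_
    ext x
    simp [SimpleGraph.ConnectedComponent.mem_supp_iff]
  obtain ⟨C, -, hC⟩ := exists_lt_of_sum_lt (hfib t ▸ hfib s ▸ h)
  exact ⟨C, hC⟩

theorem _root_.SimpleGraph.card_edgeFinset_between_inter_sym2_le {G : SimpleGraph V}
    [DecidableRel G.Adj] (J B K : Finset V) :
    #((G.between J B).edgeFinset ∩ K.sym2) ≤ ∑ j ∈ J ∩ K, #{b ∈ B ∩ K | G.Adj j b} := by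
  calc _ ≤ #((J ∩ K).biUnion fun j => {b ∈ B ∩ K | G.Adj j b}.image (s(j, ·))) := by
        refine card_le_card fun e he => ?_
        induction e using Sym2.ind with
        | h x y =>
          simp only [mem_inter, SimpleGraph.mem_edgeFinset, SimpleGraph.mem_edgeSet,
            SimpleGraph.between_adj, mk_mem_sym2_iff] at he
          simp only [mem_biUnion, mem_image, mem_filter, mem_inter]
          obtain ⟨⟨hxy, ⟨hx, hy⟩ | ⟨hx, hy⟩⟩, hxK, hyK⟩ := he
          · exact ⟨x, ⟨hx, hxK⟩, y, ⟨⟨hy, hyK⟩, hxy⟩, rfl⟩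
          · exact ⟨y, ⟨hy, hyK⟩, x, ⟨⟨hx, hxK⟩, hxy.symm⟩, Sym2.eq_swap⟩
    _ ≤ _ := card_biUnion_le.trans (sum_le_sum fun _ _ => card_image_le)

end Components

section Graphs

variable {G : SimpleGraph V} [DecidableRel G.Adj]

theorem MaxDegLE.sum_card_filter_adj_le [Finite V] {Δ : ℕ} (hΔ : MaxDegLE G Δ)
    (s t : Finset V) : ∑ u ∈ s, #{a ∈ t | G.Adj u a} ≤ #t * Δ := by
  change ∑ u ∈ s, #(t.bipartiteAbove G.Adj u) ≤ _
  rw [sum_card_bipartiteAbove_eq_sum_card_bipartiteBelow, ← smul_eq_mul]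
  refine sum_le_card_nsmul _ _ _ fun a _ => (hΔ a).trans' ?_
  rw [← Set.ncard_coe_finset]
  exact Set.ncard_le_ncard (fun u hu => (mem_filter.1 hu).2.symm) (Set.toFinite _)

variable [DecidableEq V]

theorem ClawFree.card_filter_adj_le_two (hclaw : ClawFree G) {T : Finset V}
    (hT : IsIndepSet G T) (x : V) : #{y ∈ T | G.Adj x y} ≤ 2 := by
  by_contra! hlt
  obtain ⟨t, hts, ht⟩ := exists_subset_card_eq hlt
  obtain ⟨a, b, c, hab, hac, hbc, rfl⟩ := card_eq_three.1 ht
  simp only [insert_subset_iff, singleton_subset_iff, mem_filter] at hts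
  obtain ⟨⟨ha, hxa⟩, ⟨hb, hxb⟩, ⟨hc, hxc⟩⟩ := hts
  exact hclaw ⟨x, a, b, c, hab, hac, hbc, hxa, hxb, hxc, hT a ha b hb, hT a ha c hc, hT b hb c hc⟩

end Graphs

section Exchange

variable [Fintype V] [DecidableEq V] {G : SimpleGraph V} [DecidableRel G.Adj]

/-- All degrees in `G.between J B` are at most `2` (at most `1` on `P`), so a component with
more vertices in `J` than in `B` is a path with both ends in `J`, and only its ends can lie
in `P`. -/
theorem ClawFree.card_inter_supp_between_of_lt (hclaw : ClawFree G) {J B P : Finset V}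
    (hJ : IsIndepSet G J) (hB : IsIndepSet G B) (hJB : Disjoint J B)
    (hP : ∀ x ∈ J ∩ P, #{b ∈ B | G.Adj x b} ≤ 1) (C : (G.between J B).ConnectedComponent)
    (hC : #(B ∩ C.supp.toFinset) < #(J ∩ C.supp.toFinset)) :
    #(J ∩ C.supp.toFinset) = #(B ∩ C.supp.toFinset) + 1 ∧
      #(J ∩ C.supp.toFinset ∩ P) ≤ 2 := by
  set K := C.supp.toFinset
  have hconn : #(J ∩ K) + #(B ∩ K) ≤ ∑ j ∈ J ∩ K, #{b ∈ B ∩ K | G.Adj j b} + 1 := by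
    rw [← card_union_of_disjoint (hJB.mono inter_subset_left inter_subset_left)]
    exact (card_le_card (union_subset inter_subset_right inter_subset_right)).trans <|
      C.card_supp_le_card_edgeFinset_inter_add_one.trans
        (Nat.add_le_add_right (G.card_edgeFinset_between_inter_sym2_le J B K) 1)
  have hdegB : ∑ j ∈ J ∩ K, #{b ∈ B ∩ K | G.Adj j b} ≤ #(B ∩ K) * 2 := by
    change ∑ j ∈ J ∩ K, #((B ∩ K).bipartiteAbove G.Adj j) ≤ _
    rw [sum_card_bipartiteAbove_eq_sum_card_bipartiteBelow, ← smul_eq_mul]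
    refine sum_le_card_nsmul _ _ _ fun b _ => (hclaw.card_filter_adj_le_two hJ b).trans' ?_
    exact card_le_card fun j hj => by
      simp only [bipartiteBelow, mem_filter, mem_inter] at hj ⊢
      exact ⟨hj.1.1, hj.2.symm⟩
  have hdegJ : ∀ j ∈ J ∩ K, #{b ∈ B ∩ K | G.Adj j b} + (if j ∈ P then 1 else 0) ≤ 2 := by
    intro j hj
    have hsub : {b ∈ B ∩ K | G.Adj j b} ⊆ {b ∈ B | G.Adj j b} :=
      filter_subset_filter _ inter_subset_left
    have hle := card_le_card hsub
    split_ifs with hjP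
    · have := hP j (mem_inter.2 ⟨(mem_inter.1 hj).1, hjP⟩); omega
    · have := hclaw.card_filter_adj_le_two hB j; omega
  have hcardP : ∑ j ∈ J ∩ K, #{b ∈ B ∩ K | G.Adj j b} + #(J ∩ K ∩ P) ≤ 2 * #(J ∩ K) := by
    rw [← filter_mem_eq_inter (s := J ∩ K), card_filter, ← sum_add_distrib, mul_comm,
      ← smul_eq_mul]
    exact sum_le_card_nsmul _ _ _ hdegJ
  omega

theorem ClawFree.exists_indepSet_exchange (hclaw : ClawFree G) {A I P : Finset V}
    (hA : IsIndepSet G A) (hI : IsIndepSet G I) (hcard : #A + 1 = #I) (hAP : Disjoint A P)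
    (hP : ∀ x ∈ I ∩ P, #{a ∈ A | G.Adj x a} ≤ 1) :
    ∃ E ⊆ A ∪ I, IsIndepSet G E ∧ #E = #I ∧ #(E ∩ P) ≤ 2 := by
  set J := I \ A
  set B := A \ I
  have hJB : #B < #J := by
    have hI' : #J + #(I ∩ A) = #I := card_sdiff_add_card_inter I A
    have hA' : #B + #(I ∩ A) = #A := inter_comm A I ▸ card_sdiff_add_card_inter A I
    omega
  obtain ⟨C, hC⟩ := (G.between J B).exists_connectedComponent_card_inter_lt hJB
  set K := C.supp.toFinset
  have hP' : ∀ x ∈ J ∩ P, #{b ∈ B | G.Adj x b} ≤ 1 := fun x hx =>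
    (card_le_card (filter_subset_filter _ sdiff_subset)).trans
      (hP x (inter_subset_inter_right sdiff_subset hx))
  obtain ⟨hcardK, hPK⟩ : #(J ∩ K) = #(B ∩ K) + 1 ∧ #(J ∩ K ∩ P) ≤ 2 :=
    hclaw.card_inter_supp_between_of_lt (hI.mono sdiff_subset) (hA.mono sdiff_subset)
      disjoint_sdiff_sdiff hP' C hC
  have hcross : ∀ j ∈ J ∩ K, ∀ a ∈ A, G.Adj j a → a ∈ B ∩ K := by
    intro j hj a ha hja
    rw [mem_inter] at hj ⊢
    have haB : a ∈ B := mem_sdiff.2 ⟨ha, fun haI => hI j (sdiff_subset hj.1) a haI hja⟩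
    refine ⟨haB, ?_⟩
    simpa [K] using (C.mem_supp_congr_adj (v := j) (w := a)
      ⟨hja, Or.inl ⟨hj.1, haB⟩⟩).1 (by simpa [K] using hj.2)
  refine ⟨(A \ (B ∩ K)) ∪ (J ∩ K),
    union_subset_union sdiff_subset (inter_subset_left.trans sdiff_subset), ?_, ?_, ?_⟩
  · simp only [IsIndepSet, mem_union, mem_sdiff]
    rintro x (⟨hx, hxBK⟩ | hx) y (⟨hy, hyBK⟩ | hy) hxy
    · exact hA x hx y hy hxy
    · exact hxBK (hcross y hy x hx hxy.symm)
    · exact hyBK (hcross x hx y hy hxy)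
    · exact hI x (sdiff_subset (mem_inter.1 hx).1) y (sdiff_subset (mem_inter.1 hy).1) hxy
  · have hdisj : Disjoint (A \ (B ∩ K)) (J ∩ K) :=
      (sdiff_disjoint : Disjoint (I \ A) A).symm.mono sdiff_subset inter_subset_left
    have hBK : B ∩ K ⊆ A := inter_subset_left.trans sdiff_subset
    have := card_le_card hBK
    rw [card_union_of_disjoint hdisj, card_sdiff_of_subset hBK]
    omega
  · refine (card_le_card fun x hx => ?_).trans hPK
    obtain ⟨hxE, hxP⟩ := mem_inter.1 hx
    rcases mem_union.1 hxE with hxA | hxJK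
    · exact absurd hxP (disjoint_left.1 hAP (mem_sdiff.1 hxA).1)
    · exact mem_inter.2 ⟨hxJK, hxP⟩

end Exchange

section Main

variable [DecidableEq V] {G : SimpleGraph V} [DecidableRel G.Adj] {n : ℕ} {A S W : Finset V}

theorem one_le_card_filter_adj_of_not_containsIndepSet (hA : IsIndepSet G A)
    (hAn : #A + 1 = n) (hAS : A ⊆ S) {u : V} (hu : u ∉ S)
    (h : ¬ ContainsIndepSet G n (insert u S)) : 1 ≤ #{a ∈ A | G.Adj u a} := by
  by_contra! h0
  refine h ⟨insert u A, insert_subset_insert u hAS, ?_, hA.insert fun a ha hua => ?_⟩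
  · rw [card_insert_of_notMem fun huA => hu (hAS huA), hAn]
  · exact (card_pos.2 ⟨a, mem_filter.2 ⟨ha, hua⟩⟩).ne' (Nat.lt_one_iff.1 h0)

theorem ClawFree.indLink_eq_powerset [Fintype V] (hclaw : ClawFree G) (hA : IsIndepSet G A)
    (hAn : #A + 1 = n) (hAS : A ⊆ S) (hWS : Disjoint W S)
    (hdeg : ∀ u ∈ W, #{a ∈ A | G.Adj u a} ≤ 1)
    (hsmall : ∀ T ⊆ W, #T ≤ 2 → ¬ ContainsIndepSet G n (T ∪ S)) :
    indLink G n S W = W.powerset := by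
  refine indLink_eq_powerset_of_forall fun η hηW ⟨I, hIS, hIcard, hI⟩ => ?_
  obtain ⟨E, hEAI, hE, hEcard, hEW⟩ := hclaw.exists_indepSet_exchange hA hI
    (hAn.trans hIcard.symm) (hWS.symm.mono_left hAS) fun x hx => hdeg x (mem_inter.1 hx).2
  refine hsmall (E ∩ W) inter_subset_right hEW ⟨E, fun x hx => ?_, hEcard.trans hIcard, hE⟩
  rcases mem_union.1 (hEAI hx) with hxA | hxI
  · exact mem_union_right _ (hAS hxA)
  · rcases mem_union.1 (hIS hxI) with hxη | hxS
    · exact mem_union_left _ (mem_inter.2 ⟨hx, hηW hxη⟩)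
    · exact mem_union_right _ hxS

theorem ClawFree.collapsible_indLink [Fintype V] (hclaw : ClawFree G) (hA : IsIndepSet G A)
    (hAn : #A + 1 = n) (W : Finset V) :
    ∀ S, A ⊆ S → Disjoint W S →
      Collapsible ((∑ u ∈ W, #{a ∈ A | G.Adj u a}) / 2) (indLink G n S W) := by
  induction W using Finset.strongInduction with
  | H W ih =>
  intro S hAS hWS
  by_cases hS : ContainsIndepSet G n S
  · rw [indLink_eq_empty hS]
    exact .refl
  have hdel : ∀ v ∈ W, Collapsible ((∑ u ∈ W, #{a ∈ A | G.Adj u a}) / 2)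
      (indLink G n S (W.erase v)) := fun v hv =>
    (ih _ (erase_ssubset hv) S hAS (hWS.mono_left (erase_subset v W))).mono
      (Nat.div_le_div_right (sum_le_sum_of_subset (erase_subset v W)))
  by_cases h1 : ∃ u ∈ W, ContainsIndepSet G n (insert u S)
  · obtain ⟨u, hu, hbad⟩ := h1
    rw [indLink_erase hbad]
    exact hdel u hu
  push Not at h1
  have hdeg : ∀ u ∈ W, 1 ≤ #{a ∈ A | G.Adj u a} := fun u hu =>
    one_le_card_filter_adj_of_not_containsIndepSet hA hAn hAS (disjoint_left.1 hWS hu) (h1 u hu)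
  have hcone : ∀ v ∈ W, ∀ W' ⊆ W.erase v,
      link (indLink G n S W) {v} = indLink G n (insert v S) W' →
      ∑ u ∈ W', #{a ∈ A | G.Adj u a} + 2 ≤ ∑ u ∈ W, #{a ∈ A | G.Adj u a} →
      Collapsible ((∑ u ∈ W, #{a ∈ A | G.Adj u a}) / 2) (indLink G n S W) := by
    intro v hv W' hW' hlink hdrop
    have hW'S : Disjoint W' (insert v S) := disjoint_insert_right.2
      ⟨fun hvW' => (mem_erase.1 (hW' hvW')).1 rfl, hWS.mono_left (hW'.trans (erase_subset v W))⟩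
    have hlk := ih W' (hW'.trans_ssubset (erase_ssubset hv)) (insert v S)
      (hAS.trans (subset_insert v S)) hW'S
    refine (Collapsible.of_link_of_deleteVert isSimplicialComplex_indLink (hlink ▸ hlk)
      (deleteVert_indLink (v := v) ▸ hdel v hv)).mono (max_le (by omega) le_rfl)
  by_cases h2 : ∃ v ∈ W, 2 ≤ #{a ∈ A | G.Adj v a}
  · obtain ⟨v, hv, hv2⟩ := h2
    refine hcone v hv _ subset_rfl (link_indLink hv) ?_
    rw [← add_sum_erase W _ hv]
    omega
  by_cases h3 : ∃ u ∈ W, ∃ v ∈ W, u ≠ v ∧ ContainsIndepSet G n (insert u (insert v S))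
  · obtain ⟨u, hu, v, hv, huv, hbad⟩ := h3
    have hu' : u ∈ W.erase v := mem_erase.2 ⟨huv, hu⟩
    refine hcone v hv _ (erase_subset u _) ((link_indLink hv).trans (indLink_erase hbad)) ?_
    rw [← add_sum_erase W _ hv, ← add_sum_erase _ _ hu']
    linarith [hdeg u hu, hdeg v hv]
  push Not at h2 h3
  rw [hclaw.indLink_eq_powerset hA hAn hAS hWS (fun u hu => Nat.le_of_lt_succ (h2 u hu))
    (not_containsIndepSet_union_of_card_le_two hS h1 h3)]
  exact collapsible_powerset _ _

end Main

/-- Let `G` be claw-free with maximum degree at most `Δ` and let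
`A` be an independent set of size `n - 1` in `G`. Then
`C(lk(I_n(G), A)) ≤ ⌊(n - 1) Δ / 2⌋`. -/
theorem collapseNum_link_indComplex_le_of_clawFree {V : Type*} [DecidableEq V]
    [Fintype V] (G : SimpleGraph V) (Δ : ℕ) (hclaw : ClawFree G) (hΔ : MaxDegLE G Δ)
    (n : ℕ) (hn : 1 ≤ n)
    (A : Finset V) (hAind : IsIndepSet G A) (hAcard : A.card = n - 1) :
    collapseNum (link (indComplex G n) A) ≤ (n - 1) * Δ / 2 := by
  classical
  rw [link_indComplex_eq_indLink]
  have hcoll := hclaw.collapsible_indLink hAind (by omega : #A + 1 = n) (univ \ A) A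
    subset_rfl sdiff_disjoint
  refine Nat.sInf_le (hcoll.mono (Nat.div_le_div_right ?_))
  rw [← hAcard]
  exact hΔ.sum_card_filter_adj_le _ _

end PaperKL
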